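/- Let φ(z) = az + b with a, b ∈ ℂ, |a| < 1. Then the composition operator C_φ f = f ∘ φ is bounded on the Fock space F²(ℂ). -/

import Mathlib

open MeasureTheory Complex Real Filter

/-- The Gaussian-weighted square integrand for the Fock space. -/
noncomputable def fockIntegrand (f : ℂ → ℂ) (z : ℂ) : ℝ := ‖f z‖ ^ 2 * Real.exp (-‖z‖ ^ 2)

/-- The squared Fock norm: π⁻¹ ∫ |f|² e^{-|z|²} dV. -/
noncomputable def fockNormSq (f : ℂ → ℂ) : ℝ := π⁻¹ * ∫ z : ℂ, fockIntegrand f z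

/-- Membership in the Fock space F²(ℂ): entire and Gaussian square-integrable. -/
def MemFock (f : ℂ → ℂ) : Prop := Differentiable ℂ f ∧ Integrable (fockIntegrand f)

/-!
For `a ≠ 0`, the inequality `‖az + b‖² ≤ ‖z‖² + ‖b‖²/(1 - ‖a‖²)` bounds the Fock weight at `z` by
a constant times the weight at `az + b`, and the affine substitution `w = az + b` costs the
Jacobian factor `|a|⁻²`. For `a = 0` the operator sends `f` to the constant `f(b)`, so what is
needed is a bound on point evaluation: by the sub-mean-value property of `|f|²` on circles around
`b`, integrated in polar coordinates against a Gaussian centred at `b`, `|f(b)|²` is controlled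
by the Fock norm.
-/

open scoped ENNReal

section AffineChangeOfVariables

variable {E : Type*} [NormedAddCommGroup E] {a : ℂ} (b : ℂ)

theorem measurableEmbedding_mul_add (ha : a ≠ 0) :
    MeasurableEmbedding (fun z : ℂ => a * z + b) :=
  ((Homeomorph.mulLeft₀ a ha).trans (Homeomorph.addRight b)).measurableEmbedding

/-- Multiplication by `a` is the real-linear map of determinant `|a|²`. -/
theorem map_mul_add_volume (ha : a ≠ 0) :
    Measure.map (fun z : ℂ => a * z + b) volume = ENNReal.ofReal (normSq a)⁻¹ • volume := by
  have hdet : LinearMap.det (Algebra.lmul ℝ ℂ a : ℂ →ₗ[ℝ] ℂ) = normSq a := by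
    rw [← Algebra.norm_apply, Algebra.norm_complex_apply]
  have hmul : Measure.map (a * ·) volume = ENNReal.ofReal (normSq a)⁻¹ • volume := by
    have := Measure.map_linearMap_addHaar_eq_smul_addHaar (volume : Measure ℂ)
      (f := Algebra.lmul ℝ ℂ a) (by rw [hdet]; exact (normSq_pos.2 ha).ne')
    rwa [hdet, abs_of_nonneg (inv_nonneg.2 (normSq_nonneg a))] at this
  calc Measure.map (fun z : ℂ => a * z + b) volume
      = (Measure.map (a * ·) volume).map (· + b) :=
        (Measure.map_map (measurable_add_const b) (measurable_const_mul a)).symm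
    _ = ENNReal.ofReal (normSq a)⁻¹ • volume := by
        rw [hmul, Measure.map_smul, map_add_right_eq_self]

theorem integrable_comp_mul_add {g : ℂ → E} (hg : Integrable g) (ha : a ≠ 0) :
    Integrable (fun z => g (a * z + b)) := by
  refine (measurableEmbedding_mul_add b ha).integrable_map_iff.1 ?_
  rw [map_mul_add_volume b ha]
  exact hg.smul_measure ENNReal.ofReal_ne_top

theorem integral_comp_mul_add [NormedSpace ℝ E] (g : ℂ → E) (ha : a ≠ 0) :
    ∫ z, g (a * z + b) = (normSq a)⁻¹ • ∫ z, g z := by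
  rw [← (measurableEmbedding_mul_add b ha).integral_map, map_mul_add_volume b ha,
    integral_smul_measure, ENNReal.toReal_ofReal (inv_nonneg.2 (normSq_nonneg a))]

end AffineChangeOfVariables

theorem integral_exp_neg_mul_norm_sq {c : ℝ} (hc : 0 < c) :
    ∫ z : ℂ, rexp (-c * ‖z‖ ^ 2) = π / c := by
  simpa using GaussianFourier.integral_rexp_neg_mul_sq_norm (V := ℂ) hc

theorem integrable_exp_neg_mul_norm_sq {c : ℝ} (hc : 0 < c) :
    Integrable fun z : ℂ => rexp (-c * ‖z‖ ^ 2) :=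
  Integrable.of_integral_ne_zero (by rw [integral_exp_neg_mul_norm_sq hc]; positivity)

theorem norm_mul_add_sq_le {a : ℂ} (ha : ‖a‖ < 1) (b z : ℂ) :
    ‖a * z + b‖ ^ 2 ≤ ‖z‖ ^ 2 + ‖b‖ ^ 2 / (1 - ‖a‖ ^ 2) := by
  have h1 : ‖a * z + b‖ ≤ ‖a‖ * ‖z‖ + ‖b‖ := (norm_add_le _ _).trans_eq (by rw [norm_mul])
  have h2 : 0 < 1 - ‖a‖ ^ 2 := by nlinarith [norm_nonneg a]
  have h3 : (‖a‖ * ‖z‖ + ‖b‖) ^ 2 ≤ ‖z‖ ^ 2 + ‖b‖ ^ 2 / (1 - ‖a‖ ^ 2) := by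
    rw [← sub_le_iff_le_add', le_div_iff₀ h2]
    nlinarith [sq_nonneg ((1 - ‖a‖ ^ 2) * ‖z‖ - ‖a‖ * ‖b‖)]
  exact (pow_le_pow_left₀ (norm_nonneg _) h1 2).trans h3

theorem lintegral_eq_lintegral_circleMap {H : ℂ → ℝ≥0∞} (hH : Measurable H) :
    ∫⁻ w, H w = ∫⁻ r in Set.Ioi 0, ENNReal.ofReal r *
      ∫⁻ θ in Set.Ioo (-π) π, H (circleMap 0 r θ) := by
  have hpolar : ∀ p : ℝ × ℝ, Complex.polarCoord.symm p = circleMap 0 p.1 p.2 := by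
    intro p
    simp [circleMap, Complex.exp_mul_I]
  rw [← Complex.lintegral_comp_polarCoord_symm,
    show polarCoord.target = Set.Ioi (0 : ℝ) ×ˢ Set.Ioo (-π) π from rfl, Measure.volume_eq_prod,
    ← Measure.prod_restrict, lintegral_prod]
  · refine lintegral_congr fun r => ?_
    simp only [hpolar, smul_eq_mul]
    exact lintegral_const_mul _ (hH.comp (by fun_prop))
  · simp only [hpolar]
    fun_prop

theorem norm_sq_le_circleAverage {f : ℂ → ℂ} (hf : Differentiable ℂ f) (c : ℂ) (R : ℝ) :
    ‖f c‖ ^ 2 ≤ circleAverage (fun z => ‖f z‖ ^ 2) c R := by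
  have hmean : circleAverage (fun z => f z * f z) c R = f c * f c :=
    (hf.mul hf).diffContOnCl.circleAverage
  rw [sq, ← norm_mul, ← hmean, circleAverage, circleAverage, norm_smul, Real.norm_eq_abs,
    abs_of_pos (inv_pos.2 two_pi_pos), smul_eq_mul]
  gcongr
  refine (intervalIntegral.norm_integral_le_integral_norm two_pi_pos.le).trans_eq ?_
  simp only [norm_mul, sq]

theorem two_pi_smul_circleAverage {E : Type*} [NormedAddCommGroup E] [NormedSpace ℝ E]
    (f : ℂ → E) (c : ℂ) (R : ℝ) :
    (2 * π) • circleAverage f c R = ∫ θ in Set.Ioo (-π) π, f (circleMap c R θ) := by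
  rw [circleAverage_eq_integral_add (-π), smul_smul, mul_inv_cancel₀ two_pi_pos.ne', one_smul,
    intervalIntegral.integral_comp_add_right (fun θ => f (circleMap c R θ)),
    intervalIntegral.integral_of_le (by linarith [pi_pos]), integral_Ioc_eq_integral_Ioo]
  congr 2
  ring_nf

theorem ofReal_mul_lintegral_radial_le {g : ℂ → ℝ} (hg : Continuous g) (hg0 : 0 ≤ g) {c : ℂ}
    (hmean : ∀ r, 0 < r → g c ≤ circleAverage g c r) {φ : ℝ → ℝ≥0∞} (hφ : Measurable φ) :
    ENNReal.ofReal (g c) * ∫⁻ w : ℂ, φ ‖w‖ ≤ ∫⁻ w, ENNReal.ofReal (g (c + w)) * φ ‖w‖ := by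
  rw [← lintegral_const_mul' _ _ ENNReal.ofReal_ne_top,
    lintegral_eq_lintegral_circleMap (by fun_prop), lintegral_eq_lintegral_circleMap (by fun_prop)]
  refine setLIntegral_mono' measurableSet_Ioi fun r (hr : 0 < r) => ?_
  gcongr ENNReal.ofReal r * ?_
  have hcircle : ∀ θ, c + circleMap 0 r θ = circleMap c r θ := fun θ => by simp [circleMap]
  simp only [norm_circleMap_zero, abs_of_pos hr, hcircle]
  rw [lintegral_mul_const _ (by fun_prop), lintegral_mul_const _ (by fun_prop), setLIntegral_const,
    Real.volume_Ioo]
  gcongr ?_ * φ r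
  have hint : IntegrableOn (fun θ => g (circleMap c r θ)) (Set.Ioo (-π) π) :=
    (hg.comp (continuous_circleMap c r)).integrableOn_Icc.mono_set Set.Ioo_subset_Icc_self
  rw [← ofReal_integral_eq_lintegral_ofReal hint (ae_of_all _ fun θ => hg0 _),
    ← two_pi_smul_circleAverage, smul_eq_mul, ← ENNReal.ofReal_mul (hg0 c)]
  exact ENNReal.ofReal_le_ofReal (by nlinarith [hmean r hr, pi_pos])

theorem fockIntegrand_nonneg (f : ℂ → ℂ) (z : ℂ) : 0 ≤ fockIntegrand f z := by
  unfold fockIntegrand; positivity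

theorem Continuous.fockIntegrand {f : ℂ → ℂ} (hf : Continuous f) :
    Continuous (fockIntegrand f) := by
  unfold _root_.fockIntegrand; fun_prop

theorem memFock_const (c : ℂ) : MemFock fun _ => c := by
  refine ⟨differentiable_const c, ?_⟩
  have := (integrable_exp_neg_mul_norm_sq one_pos).const_mul (‖c‖ ^ 2)
  simp only [neg_mul, one_mul] at this
  exact this

theorem fockNormSq_const (c : ℂ) : fockNormSq (fun _ => c) = ‖c‖ ^ 2 := by
  have := integral_exp_neg_mul_norm_sq one_pos
  simp only [neg_mul, one_mul, div_one] at this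
  simp only [fockNormSq, fockIntegrand, integral_const_mul, this]
  field_simp

theorem mul_exp_neg_two_mul_le_fockIntegrand_add (f : ℂ → ℂ) (b w : ℂ) :
    rexp (-2 * ‖b‖ ^ 2) * (‖f (b + w)‖ ^ 2 * rexp (-2 * ‖w‖ ^ 2)) ≤ fockIntegrand f (b + w) := by
  have hnorm : ‖b + w‖ ^ 2 ≤ 2 * ‖b‖ ^ 2 + 2 * ‖w‖ ^ 2 := by
    nlinarith [norm_add_le b w, norm_nonneg (b + w), sq_nonneg (‖b‖ - ‖w‖)]
  calc rexp (-2 * ‖b‖ ^ 2) * (‖f (b + w)‖ ^ 2 * rexp (-2 * ‖w‖ ^ 2))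
      = ‖f (b + w)‖ ^ 2 * rexp (-2 * ‖b‖ ^ 2 + -2 * ‖w‖ ^ 2) := by rw [Real.exp_add]; ring
    _ ≤ fockIntegrand f (b + w) := by unfold fockIntegrand; gcongr; linarith

theorem MemFock.exp_mul_norm_sq_le_integral {f : ℂ → ℂ} (hf : MemFock f) (b : ℂ) :
    rexp (-2 * ‖b‖ ^ 2) * (‖f b‖ ^ 2 * (π / 2)) ≤ ∫ z, fockIntegrand f z := by
  have hsubmean : ENNReal.ofReal (‖f b‖ ^ 2) * ∫⁻ w : ℂ, ENNReal.ofReal (rexp (-2 * ‖w‖ ^ 2))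
      ≤ ∫⁻ w, ENNReal.ofReal (‖f (b + w)‖ ^ 2) * ENNReal.ofReal (rexp (-2 * ‖w‖ ^ 2)) :=
    ofReal_mul_lintegral_radial_le (g := fun z => ‖f z‖ ^ 2) (hf.1.continuous.norm.pow 2)
      (fun z => by positivity) (fun r _ => norm_sq_le_circleAverage hf.1 b r)
      (φ := fun r => ENNReal.ofReal (rexp (-2 * r ^ 2))) (by fun_prop)
  have hgauss : ∫⁻ w : ℂ, ENNReal.ofReal (rexp (-2 * ‖w‖ ^ 2)) = ENNReal.ofReal (π / 2) := by
    rw [← ofReal_integral_eq_lintegral_ofReal (integrable_exp_neg_mul_norm_sq two_pos)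
      (ae_of_all _ fun w => (exp_pos _).le), integral_exp_neg_mul_norm_sq two_pos]
  rw [← ENNReal.ofReal_le_ofReal_iff (integral_nonneg (fockIntegrand_nonneg f))]
  calc
    _ = ENNReal.ofReal (rexp (-2 * ‖b‖ ^ 2)) * (ENNReal.ofReal (‖f b‖ ^ 2) *
          ∫⁻ w : ℂ, ENNReal.ofReal (rexp (-2 * ‖w‖ ^ 2))) := by
        rw [hgauss, ENNReal.ofReal_mul (by positivity), ENNReal.ofReal_mul (by positivity)]
    _ ≤ ENNReal.ofReal (rexp (-2 * ‖b‖ ^ 2)) *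
          ∫⁻ w, ENNReal.ofReal (‖f (b + w)‖ ^ 2) * ENNReal.ofReal (rexp (-2 * ‖w‖ ^ 2)) :=
        mul_le_mul_of_nonneg_left hsubmean zero_le
    _ = ∫⁻ w, ENNReal.ofReal (rexp (-2 * ‖b‖ ^ 2) * (‖f (b + w)‖ ^ 2 * rexp (-2 * ‖w‖ ^ 2))) := by
        rw [← lintegral_const_mul' _ _ ENNReal.ofReal_ne_top]
        simp only [ENNReal.ofReal_mul (exp_pos _).le, ENNReal.ofReal_mul (sq_nonneg _)]
    _ ≤ ∫⁻ w, ENNReal.ofReal (fockIntegrand f (b + w)) :=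
        lintegral_mono fun w =>
          ENNReal.ofReal_le_ofReal (mul_exp_neg_two_mul_le_fockIntegrand_add f b w)
    _ = ENNReal.ofReal (∫ z, fockIntegrand f z) := by
        rw [lintegral_add_left_eq_self (fun z => ENNReal.ofReal (fockIntegrand f z)),
          ofReal_integral_eq_lintegral_ofReal hf.2 (ae_of_all _ (fockIntegrand_nonneg f))]

theorem MemFock.norm_sq_le {f : ℂ → ℂ} (hf : MemFock f) (b : ℂ) :
    ‖f b‖ ^ 2 ≤ 2 * rexp (2 * ‖b‖ ^ 2) * fockNormSq f := by
  have hexp : rexp (2 * ‖b‖ ^ 2) * rexp (-2 * ‖b‖ ^ 2) = 1 := by rw [← Real.exp_add]; simp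
  calc ‖f b‖ ^ 2
      = π⁻¹ * (2 * rexp (2 * ‖b‖ ^ 2) * (rexp (-2 * ‖b‖ ^ 2) * (‖f b‖ ^ 2 * (π / 2)))) := by
        rw [show ∀ x y z : ℝ, π⁻¹ * (2 * x * (y * (z * (π / 2)))) = x * y * z * (π⁻¹ * π) by
          intros; ring, hexp, inv_mul_cancel₀ pi_ne_zero]
        ring
    _ ≤ π⁻¹ * (2 * rexp (2 * ‖b‖ ^ 2) * ∫ z, fockIntegrand f z) := by
        gcongr; exact hf.exp_mul_norm_sq_le_integral b
    _ = 2 * rexp (2 * ‖b‖ ^ 2) * fockNormSq f := by unfold fockNormSq; ring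

theorem fockIntegrand_comp_mul_add_le {a : ℂ} (ha : ‖a‖ < 1) (b : ℂ) (f : ℂ → ℂ) (z : ℂ) :
    fockIntegrand (fun z => f (a * z + b)) z
      ≤ rexp (‖b‖ ^ 2 / (1 - ‖a‖ ^ 2)) * fockIntegrand f (a * z + b) := by
  have hexp : rexp (-‖z‖ ^ 2) ≤ rexp (‖b‖ ^ 2 / (1 - ‖a‖ ^ 2)) * rexp (-‖a * z + b‖ ^ 2) := by
    rw [← Real.exp_add]
    gcongr
    linarith [norm_mul_add_sq_le ha b z]
  calc fockIntegrand (fun z => f (a * z + b)) z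
      ≤ ‖f (a * z + b)‖ ^ 2 * (rexp (‖b‖ ^ 2 / (1 - ‖a‖ ^ 2)) * rexp (-‖a * z + b‖ ^ 2)) := by
        unfold fockIntegrand; gcongr
    _ = rexp (‖b‖ ^ 2 / (1 - ‖a‖ ^ 2)) * fockIntegrand f (a * z + b) := by
        unfold fockIntegrand; ring

theorem MemFock.comp_mul_add {f : ℂ → ℂ} (hf : MemFock f) {a : ℂ} (ha : ‖a‖ < 1) (ha0 : a ≠ 0)
    (b : ℂ) : MemFock fun z => f (a * z + b) := by
  have hd : Differentiable ℂ fun z => f (a * z + b) := hf.1.comp (by fun_prop)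
  refine ⟨hd, Integrable.mono' ((integrable_comp_mul_add b hf.2 ha0).const_mul
    (rexp (‖b‖ ^ 2 / (1 - ‖a‖ ^ 2)))) hd.continuous.fockIntegrand.aestronglyMeasurable
    (ae_of_all _ fun z => ?_)⟩
  rw [Real.norm_of_nonneg (fockIntegrand_nonneg _ _)]
  exact fockIntegrand_comp_mul_add_le ha b f z

theorem MemFock.fockNormSq_comp_mul_add_le {f : ℂ → ℂ} (hf : MemFock f) {a : ℂ} (ha : ‖a‖ < 1)
    (ha0 : a ≠ 0) (b : ℂ) : fockNormSq (fun z => f (a * z + b))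
      ≤ rexp (‖b‖ ^ 2 / (1 - ‖a‖ ^ 2)) * (normSq a)⁻¹ * fockNormSq f := by
  have hint := integral_mono (hf.comp_mul_add ha ha0 b).2
    ((integrable_comp_mul_add b hf.2 ha0).const_mul _) (fockIntegrand_comp_mul_add_le ha b f)
  rw [integral_const_mul, integral_comp_mul_add b _ ha0, smul_eq_mul] at hint
  unfold fockNormSq
  calc π⁻¹ * ∫ z, fockIntegrand (fun z => f (a * z + b)) z
      ≤ π⁻¹ * (rexp (‖b‖ ^ 2 / (1 - ‖a‖ ^ 2)) * ((normSq a)⁻¹ * ∫ z, fockIntegrand f z)) := by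
        gcongr
    _ = _ := by ring

/-- The composition operator C_φ f = f ∘ φ with φ(z) = az + b, |a| < 1,
is bounded on the Fock space. -/
theorem composition_operator_bounded (a b : ℂ) (ha : ‖a‖ < 1) :
    ∃ C : ℝ, 0 < C ∧ ∀ f : ℂ → ℂ, MemFock f →
      MemFock (fun z => f (a * z + b)) ∧
        fockNormSq (fun z => f (a * z + b)) ≤ C * fockNormSq f := by
  rcases eq_or_ne a 0 with rfl | ha0
  · refine ⟨2 * rexp (2 * ‖b‖ ^ 2), by positivity, fun f hf => ?_⟩
    simp only [zero_mul, zero_add]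
    exact ⟨memFock_const (f b), fockNormSq_const (f b) ▸ hf.norm_sq_le b⟩
  · refine ⟨rexp (‖b‖ ^ 2 / (1 - ‖a‖ ^ 2)) * (normSq a)⁻¹,
      mul_pos (exp_pos _) (inv_pos.2 (normSq_pos.2 ha0)), fun f hf => ?_⟩
    exact ⟨hf.comp_mul_add ha ha0 b, hf.fockNormSq_comp_mul_add_le ha ha0 b⟩
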